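/- arXiv:2206.07426 — 2 statements merged into one kernel-verified Lean document; each statement's English description precedes it below -/
import Mathlib

section
/- Let G = (V,E) be a (2,2)-circuit and let X ⊊ V be a critical set. Then V \ X contains a vertex of degree 3 in G. -/
/-- A graph `G` on the finite vertex type `V` is a `(2,2)`-circuit if
`|E| = 2|V| - 1` and every proper subgraph `(V',E')` with `E'` nonempty
satisfies `|E'| ≤ 2|V'| - 2`. -/
def IsCircuit22 {V : Type*} [Fintype V] (G : SimpleGraph V) : Prop :=
  G.edgeSet.ncard + 1 = 2 * Fintype.card V ∧
  ∀ H : G.Subgraph, (H.verts ≠ Set.univ ∨ H.edgeSet ≠ G.edgeSet) →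
    H.edgeSet.Nonempty → H.edgeSet.ncard + 2 ≤ 2 * H.verts.ncard

/-- The set of edges of `G` with both endpoints in `S`. -/
def inducedEdges {V : Type*} (G : SimpleGraph V) (S : Set V) : Set (Sym2 V) :=
  {e ∈ G.edgeSet | ∀ v ∈ e, v ∈ S}

/-- A vertex set `S` is critical in `G` if `i(S) = 2|S| - 2`. -/
def Critical {V : Type*} (G : SimpleGraph V) (S : Set V) : Prop :=
  (inducedEdges G S).ncard + 2 = 2 * S.ncard

/-! Every vertex of a `(2,2)`-circuit has degree at least `3`: deleting it leaves a proper
subgraph, which has at most `2|V| - 4` edges. Now let `Y = V \ X` and suppose every vertex of `Y`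
has degree at least `4`. Counting edge ends in `Y` gives
`4|Y| ≤ ∑_{v ∈ Y} deg v = |E| - i(X) + i(Y) = 2|Y| + 1 + i(Y)`, so `i(Y) ≥ 2|Y| - 1`, which the
circuit condition forbids for the proper subset `Y`. -/

open SimpleGraph Finset

section

variable {V : Type*} (G : SimpleGraph V)

theorem edgeSet_induce_top (S : Set V) :
    ((⊤ : G.Subgraph).induce S).edgeSet = inducedEdges G S := by
  ext e
  induction e with
  | h a b =>
    simp only [Subgraph.mem_edgeSet, Subgraph.induce_adj, Subgraph.top_adj, inducedEdges,
      Set.mem_ofPred_eq, mem_edgeSet, Sym2.mem_iff, forall_eq_or_imp, forall_eq]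
    tauto

theorem inducedEdges_singleton (v : V) : inducedEdges G {v} = ∅ := by
  ext e
  induction e with
  | h a b =>
    simp only [inducedEdges, Set.mem_singleton_iff, Set.mem_ofPred_eq, mem_edgeSet, Sym2.mem_iff,
      forall_eq_or_imp, forall_eq, Set.mem_empty_iff_false, iff_false, not_and]
    rintro hab rfl rfl
    exact hab.ne rfl

theorem ncard_inducedEdges_eq_card_filter [Fintype V] [DecidableRel G.Adj] (S : Set V)
    [DecidablePred (· ∈ inducedEdges G S)] :
    (inducedEdges G S).ncard = #{e ∈ G.edgeFinset | e ∈ inducedEdges G S} := by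
  rw [← Set.ncard_coe_finset, coe_filter]
  exact congrArg _ <| Set.ext fun e => ⟨fun h => ⟨mem_edgeFinset.mpr h.1, h⟩, And.right⟩

open Classical in
theorem card_filter_mem_add_ite_inducedEdges_compl [DecidableEq V] (s : Finset V) {e : Sym2 V}
    (he : e ∈ G.edgeSet) :
    #{v ∈ s | v ∈ e} + (if e ∈ inducedEdges G (↑s)ᶜ then 1 else 0)
      = 1 + (if e ∈ inducedEdges G ↑s then 1 else 0) := by
  induction e with
  | h a b =>
    have hab : a ≠ b := (G.mem_edgeSet.mp he).ne
    by_cases ha : a ∈ s <;> by_cases hb : b ∈ s <;>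
      simp [inducedEdges, he, filter_or, filter_eq', ha, hb, hab, card_insert_of_notMem]

theorem sum_degree_add_ncard_inducedEdges_compl [Fintype V] [DecidableEq V] [DecidableRel G.Adj]
    (s : Finset V) :
    ∑ v ∈ s, G.degree v + (inducedEdges G (↑s)ᶜ).ncard
      = G.edgeSet.ncard + (inducedEdges G ↑s).ncard := by
  classical
  have hdeg : ∑ v ∈ s, G.degree v = ∑ e ∈ G.edgeFinset, #{v ∈ s | v ∈ e} := by
    simp_rw [← card_incidenceFinset_eq_degree, incidenceFinset_eq_filter]
    exact sum_card_bipartiteAbove_eq_sum_card_bipartiteBelow _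
  rw [hdeg, ncard_inducedEdges_eq_card_filter, ncard_inducedEdges_eq_card_filter,
    ← coe_edgeFinset, Set.ncard_coe_finset, card_filter, card_filter, card_eq_sum_ones,
    ← sum_add_distrib, ← sum_add_distrib]
  exact sum_congr rfl fun e he =>
    card_filter_mem_add_ite_inducedEdges_compl G s (mem_edgeFinset.mp he)

namespace IsCircuit22

variable {G} [Fintype V]

theorem ncard_inducedEdges_eq_zero_or (hG : IsCircuit22 G) {S : Set V} (hS : S ≠ Set.univ) :
    (inducedEdges G S).ncard = 0 ∨ (inducedEdges G S).ncard + 2 ≤ 2 * S.ncard := by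
  rcases (inducedEdges G S).eq_empty_or_nonempty with h | h
  · exact Or.inl (by rw [h, Set.ncard_empty])
  · right
    have := hG.2 ((⊤ : G.Subgraph).induce S) (Or.inl hS) (by rwa [edgeSet_induce_top])
    rwa [edgeSet_induce_top] at this

theorem three_le_degree [DecidableEq V] [DecidableRel G.Adj] (hG : IsCircuit22 G) (v : V) :
    3 ≤ G.degree v := by
  have hsum := sum_degree_add_ncard_inducedEdges_compl G {v}
  rw [sum_singleton, coe_singleton, inducedEdges_singleton, Set.ncard_empty] at hsum
  have hsplit : 1 + ({v}ᶜ : Set V).ncard = Fintype.card V := by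
    rw [← Set.ncard_singleton v, Set.ncard_add_ncard_compl, Nat.card_eq_fintype_card]
  have hE := hG.1
  have := G.degree_lt_card_verts v
  rcases hG.ncard_inducedEdges_eq_zero_or (S := {v}ᶜ) (by simp) with h | h <;> omega

end IsCircuit22

end

/-- If `G` is a `(2,2)`-circuit and `X ⊊ V` is critical, then `V \ X` contains a
vertex of degree `3` in `G`. -/
theorem compl_critical_contains_node {V : Type*} [Fintype V] [DecidableEq V]
    (G : SimpleGraph V) [DecidableRel G.Adj] (hG : IsCircuit22 G)
    (X : Set V) (hXp : X ≠ Set.univ) (hXc : Critical G X) :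
    ∃ v : V, v ∉ X ∧ G.degree v = 3 := by
  classical
  by_contra! hnode
  unfold Critical at hXc
  have hX : X.Nonempty := Set.nonempty_of_ncard_ne_zero (by omega)
  have hY : 0 < Xᶜ.ncard := (Set.ncard_pos).mpr (Set.nonempty_compl.mpr hXp)
  have hsplit : X.ncard + Xᶜ.ncard = Fintype.card V := by
    rw [Set.ncard_add_ncard_compl, Nat.card_eq_fintype_card]
  have hlow : Xᶜ.ncard * 4 ≤ ∑ v ∈ Xᶜ.toFinset, G.degree v := by
    rw [Set.ncard_eq_toFinset_card']
    refine card_nsmul_le_sum _ _ 4 fun v hv => ?_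
    exact (hG.three_le_degree v).lt_of_ne (hnode v (Set.mem_toFinset.mp hv)).symm
  have hsum := sum_degree_add_ncard_inducedEdges_compl G Xᶜ.toFinset
  rw [Set.coe_toFinset, compl_compl] at hsum
  have hE := hG.1
  rcases hG.ncard_inducedEdges_eq_zero_or (Set.compl_ne_univ.mpr hX) with h | h <;> omega
end

section
/- Let G be an M(2,2)-connected graph with ear decomposition C₁,…,C_t (t ≥ 2) inducing subgraphs H_i, let Y = V(H_t) \ ⋃_{i<t} V(H_i). If Y ≠ ∅, then the subgraph of G induced by Y is connected. -/
/-- The vertices incident to an edge set `C`. -/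
def edgeVerts {V : Type*} (C : Set (Sym2 V)) : Set V :=
  {v : V | ∃ e ∈ C, v ∈ e}

/-- An edge set `C ⊆ E(G)` is (the edge set of) a `(2,2)`-circuit subgraph of `G`. -/
def IsCircuitEdges {V : Type*} (G : SimpleGraph V) (C : Set (Sym2 V)) : Prop :=
  C ⊆ G.edgeSet ∧ C.ncard + 1 = 2 * (edgeVerts C).ncard ∧
  ∀ D : Set (Sym2 V), D ⊆ C → D ≠ C → D ≠ ∅ →
    D.ncard + 2 ≤ 2 * (edgeVerts D).ncard

/-- `G` is `M(2,2)`-connected: no isolated vertices, at least two edges, and every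
pair of edges lies in a common `(2,2)`-circuit of `G`. -/
def M22Connected {V : Type*} (G : SimpleGraph V) : Prop :=
  (∀ v : V, ∃ w : V, G.Adj v w) ∧ 2 ≤ G.edgeSet.ncard ∧
  ∀ e ∈ G.edgeSet, ∀ f ∈ G.edgeSet,
    ∃ C : Set (Sym2 V), IsCircuitEdges G C ∧ e ∈ C ∧ f ∈ C

/-!
Let `D` be the union of the first `t - 1` circuits. Each ear `C_i` has at least `2k + 1` edges
outside the earlier ones for its `k` new vertices (because `C_i ∩ D_{i-1}` is a proper subset of
a circuit), and minimality of its lobe lets a sparse subset of `D_{i-1}` be extended by all but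
one of these edges. Hence `D` contains a sparse set of `2|V(D)| - 2` edges, and the same extension
argument bounds the lobe `C_t \ D` by `2|Y| + 1` edges.

If `Y = Y₁ ⊔ Y₂` with no edges between the parts, the edges of `C_t` inside `X ∪ Y₁` and inside
`X ∪ Y₂` form two proper subsets of the circuit covering it and overlapping in the edges inside
`X`. Counting them shows that `C_t ∩ D`, whose edges lie inside `X`, has at most `2|X| - 3` edges,
so `C_t` would have at most `2|X| + 2|Y| - 2 < 2|V(C_t)| - 1` edges.
-/

section

open Set

variable {V : Type*}

section EdgeVerts

lemma edgeVerts_mono {A B : Set (Sym2 V)} (h : A ⊆ B) : edgeVerts A ⊆ edgeVerts B :=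
  fun _ ⟨e, he, hv⟩ => ⟨e, h he, hv⟩

lemma edgeVerts_union (A B : Set (Sym2 V)) :
    edgeVerts (A ∪ B) = edgeVerts A ∪ edgeVerts B := by
  ext v
  simp only [edgeVerts, mem_ofPred_eq, mem_union, or_and_right, exists_or]

lemma edgeVerts_biUnion {ι : Type*} (s : Set ι) (f : ι → Set (Sym2 V)) :
    edgeVerts (⋃ j ∈ s, f j) = ⋃ j ∈ s, edgeVerts (f j) := by
  ext v
  simp only [edgeVerts, mem_ofPred_eq, mem_iUnion, exists_prop]
  constructor
  · rintro ⟨e, ⟨j, hj, hje⟩, hv⟩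
    exact ⟨j, hj, e, hje, hv⟩
  · rintro ⟨j, hj, e, hje, hv⟩
    exact ⟨e, ⟨j, hj, hje⟩, hv⟩

lemma ncard_edgeVerts_singleton {G : SimpleGraph V} {e : Sym2 V} (he : e ∈ G.edgeSet) :
    (edgeVerts {e}).ncard = 2 := by
  induction e with
  | _ u w =>
    have hverts : edgeVerts {s(u, w)} = {u, w} := by
      ext
      simp [edgeVerts]
    rw [hverts, ncard_pair (G.ne_of_adj he)]

lemma ncard_edgeVerts_union [Finite V] (A B : Set (Sym2 V)) :
    (edgeVerts (A ∪ B)).ncard = (edgeVerts A).ncard + (edgeVerts B \ edgeVerts A).ncard := by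
  rw [edgeVerts_union, ← union_sdiff_self]
  exact ncard_union_eq disjoint_sdiff_right

end EdgeVerts

section Sparse

variable {G : SimpleGraph V}

/-- `(2,2)`-sparsity: the independent sets of the `(2,2)`-sparsity matroid. -/
def IsSparse (A : Set (Sym2 V)) : Prop :=
  ∀ T ⊆ A, T.Nonempty → T.ncard + 2 ≤ 2 * (edgeVerts T).ncard

lemma IsSparse.mono {A B : Set (Sym2 V)} (hB : IsSparse B) (h : A ⊆ B) : IsSparse A :=
  fun T hT => hB T (hT.trans h)

lemma IsCircuitEdges.nonempty {C : Set (Sym2 V)} (h : IsCircuitEdges G C) : C.Nonempty := by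
  rw [nonempty_iff_ne_empty]
  rintro rfl
  simpa [edgeVerts] using h.2.1

lemma IsCircuitEdges.not_isSparse {C : Set (Sym2 V)} (h : IsCircuitEdges G C) : ¬ IsSparse C :=
  fun hs => by
    have := hs C subset_rfl h.nonempty
    have := h.2.1
    omega

lemma IsCircuitEdges.isSparse_of_ssubset {C D : Set (Sym2 V)} (h : IsCircuitEdges G C)
    (hD : D ⊂ C) : IsSparse D :=
  fun T hT hne => h.2.2 T (hT.trans hD.subset) (fun hTC => hD.2 (hTC ▸ hT)) hne.ne_empty

variable [Finite V]

/-- A minimal non-sparse edge set is a circuit. -/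
lemma exists_isCircuitEdges_subset_of_not_isSparse {A : Set (Sym2 V)} (hA : A ⊆ G.edgeSet)
    (h : ¬ IsSparse A) : ∃ T ⊆ A, IsCircuitEdges G T := by
  have hbad : {T | T ⊆ A ∧ T.Nonempty ∧ 2 * (edgeVerts T).ncard < T.ncard + 2}.Nonempty := by
    simp only [IsSparse, not_forall, not_le] at h
    obtain ⟨T, hTA, hne, hlt⟩ := h
    exact ⟨T, hTA, hne, hlt⟩
  obtain ⟨T, ⟨hTA, ⟨e, he⟩, hT⟩, hmin⟩ := (toFinite _).exists_minimal hbad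
  have hproper : ∀ D ⊆ T, D ≠ T → D ≠ ∅ → D.ncard + 2 ≤ 2 * (edgeVerts D).ncard := by
    intro D hD hDT hDne
    by_contra! hlt
    exact hDT (subset_antisymm hD (hmin ⟨hD.trans hTA, nonempty_iff_ne_empty.2 hDne, hlt⟩ hD))
  refine ⟨T, hTA, hTA.trans hA, ?_, hproper⟩
  by_cases hsingle : T \ {e} = ∅
  · have hTe : T = {e} := subset_antisymm (sdiff_eq_empty.1 hsingle) (singleton_subset_iff.2 he)
    rw [hTe, ncard_edgeVerts_singleton (hA (hTA he)), ncard_singleton] at hT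
    omega
  · have hrest := hproper (T \ {e}) sdiff_subset (sdiff_singleton_ssubset.2 he).ne hsingle
    have hverts := ncard_le_ncard (edgeVerts_mono (sdiff_subset : T \ {e} ⊆ T))
    have := ncard_sdiff_singleton_add_one he
    omega

lemma exists_maximal_isSparse_union {S : Set (Sym2 V)} (hS : IsSparse S) (M : Set (Sym2 V)) :
    ∃ N ⊆ M, IsSparse (S ∪ N) ∧ ∀ f ∈ M \ N, ¬ IsSparse (insert f (S ∪ N)) := by
  obtain ⟨N, ⟨hNM, hN⟩, hmax⟩ := (toFinite {N | N ⊆ M ∧ IsSparse (S ∪ N)}).exists_maximal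
    ⟨∅, empty_subset _, by rwa [union_empty]⟩
  refine ⟨N, hNM, hN, fun f hf hsp => hf.2 ?_⟩
  exact hmax ⟨insert_subset hf.1 hNM, by rwa [union_insert]⟩ (subset_insert f N) (mem_insert f N)

end Sparse

section Ears

variable {G : SimpleGraph V}

/-- The minimality condition on an ear `C` over the earlier edges `D`; `C \ D` is its lobe. -/
def IsMinimalLobe (G : SimpleGraph V) (D C : Set (Sym2 V)) : Prop :=
  ∀ C' : Set (Sym2 V), IsCircuitEdges G C' → (C' ∩ D).Nonempty → (C' \ D).Nonempty →
    ¬ (C' \ D ⊂ C \ D)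

/-- The rank of `D` in the `(2,2)`-sparsity matroid is the maximal value `2|V(D)| - 2`. -/
def HasFullRank (D : Set (Sym2 V)) : Prop :=
  ∃ S ⊆ D, IsSparse S ∧ 2 * (edgeVerts D).ncard ≤ S.ncard + 2

variable [Finite V]

/-- Take `N` maximal. If two lobe edges `f ≠ g` lie outside `N`, a circuit through `f` inside
`S ∪ N ∪ {f}` meets `D` (it is not a proper subset of `C`) and has its lobe strictly inside
`C \ D`, missing `g`. -/
lemma exists_isSparse_union_of_isMinimalLobe {D C S : Set (Sym2 V)} (hD : D ⊆ G.edgeSet)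
    (hC : IsCircuitEdges G C) (hmin : IsMinimalLobe G D C) (hSD : S ⊆ D) (hS : IsSparse S) :
    ∃ N ⊆ C \ D, IsSparse (S ∪ N) ∧ (C \ D).ncard ≤ N.ncard + 1 := by
  obtain ⟨N, hNM, hN, hmax⟩ := exists_maximal_isSparse_union hS (C \ D)
  refine ⟨N, hNM, hN, ?_⟩
  by_contra! hlt
  have htwo : 1 < ((C \ D) \ N).ncard := by
    rw [ncard_sdiff hNM]
    omega
  obtain ⟨f, hf, g, hg, hfg⟩ := (one_lt_ncard (toFinite _)).1 htwo
  have hsub : insert f (S ∪ N) ⊆ D ∪ (C \ D) :=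
    insert_subset (Or.inr hf.1) (union_subset_union hSD hNM)
  obtain ⟨T, hTsub, hT⟩ := exists_isCircuitEdges_subset_of_not_isSparse
    (hsub.trans (union_subset hD (sdiff_subset.trans hC.1))) (hmax f hf)
  have hgT : g ∉ T := by
    intro hgT
    rcases hTsub hgT with rfl | hgS | hgN
    · exact hfg rfl
    · exact hg.1.2 (hSD hgS)
    · exact hg.2 hgN
  have hfT : f ∈ T := by
    by_contra hfT
    exact hT.not_isSparse (hN.mono ((subset_insert_iff_of_notMem hfT).1 hTsub))
  have hlobe : T \ D ⊆ C \ D := sdiff_subset_iff.2 (hTsub.trans hsub)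
  have hTD : (T ∩ D).Nonempty := by
    rw [nonempty_iff_ne_empty]
    intro hTD
    have hTC : T ⊆ C := fun x hx => (hlobe ⟨hx, fun hxD => hTD.subset ⟨hx, hxD⟩⟩).1
    exact hT.not_isSparse (hC.isSparse_of_ssubset ⟨hTC, fun h => hgT (h hg.1.1)⟩)
  exact hmin T hT hTD ⟨f, hfT, hf.1.2⟩ ⟨hlobe, fun h => hgT (h hg.1).1⟩

lemma IsCircuitEdges.two_mul_ncard_sdiff_edgeVerts_add_one_le {C D : Set (Sym2 V)}
    (hC : IsCircuitEdges G C) (hmeet : (C ∩ D).Nonempty) (hnew : (C \ D).Nonempty) :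
    2 * (edgeVerts C \ edgeVerts D).ncard + 1 ≤ (C \ D).ncard := by
  have hproper : C ∩ D ⊂ C := by
    obtain ⟨e, heC, heD⟩ := hnew
    exact ⟨inter_subset_left, fun h => heD (h heC).2⟩
  have hsparse := hC.isSparse_of_ssubset hproper (C ∩ D) subset_rfl hmeet
  have hverts := ncard_le_ncard
    (subset_inter (edgeVerts_mono inter_subset_left) (edgeVerts_mono inter_subset_right) :
      edgeVerts (C ∩ D) ⊆ edgeVerts C ∩ edgeVerts D)
  have := ncard_inter_add_ncard_sdiff_eq_ncard C D
  have := ncard_inter_add_ncard_sdiff_eq_ncard (edgeVerts C) (edgeVerts D)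
  have := hC.2.1
  omega

lemma HasFullRank.of_isCircuitEdges {C : Set (Sym2 V)} (h : IsCircuitEdges G C) :
    HasFullRank C := by
  obtain ⟨e, he⟩ := h.nonempty
  refine ⟨C \ {e}, sdiff_subset, h.isSparse_of_ssubset (sdiff_singleton_ssubset.2 he), ?_⟩
  have := ncard_sdiff_singleton_add_one he
  have := h.2.1
  omega

lemma HasFullRank.union_of_isMinimalLobe {D C : Set (Sym2 V)} (hDr : HasFullRank D)
    (hD : D ⊆ G.edgeSet) (hC : IsCircuitEdges G C) (hmeet : (C ∩ D).Nonempty)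
    (hnew : (C \ D).Nonempty) (hmin : IsMinimalLobe G D C) : HasFullRank (D ∪ C) := by
  obtain ⟨S, hSD, hS, hcount⟩ := hDr
  obtain ⟨N, hNC, hSN, hN⟩ := exists_isSparse_union_of_isMinimalLobe hD hC hmin hSD hS
  have hlow := hC.two_mul_ncard_sdiff_edgeVerts_add_one_le hmeet hnew
  refine ⟨S ∪ N, union_subset_union hSD (hNC.trans sdiff_subset), hSN, ?_⟩
  rw [ncard_edgeVerts_union, ncard_union_eq (Disjoint.mono hSD hNC disjoint_sdiff_right)]
  omega

lemma HasFullRank.ncard_sdiff_le {D C : Set (Sym2 V)} (hDr : HasFullRank D)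
    (hD : D ⊆ G.edgeSet) (hC : IsCircuitEdges G C) (hmin : IsMinimalLobe G D C) :
    (C \ D).ncard ≤ 2 * (edgeVerts C \ edgeVerts D).ncard + 1 := by
  obtain ⟨S, hSD, hS, hcount⟩ := hDr
  obtain ⟨N, hNC, hSN, hN⟩ := exists_isSparse_union_of_isMinimalLobe hD hC hmin hSD hS
  rcases (S ∪ N).eq_empty_or_nonempty with hempty | hne
  · rw [(union_empty_iff.1 hempty).2, ncard_empty] at hN
    omega
  · have hsparse := hSN (S ∪ N) subset_rfl hne
    have hverts := ncard_le_ncard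
      (edgeVerts_mono (union_subset_union hSD (hNC.trans sdiff_subset)))
    rw [ncard_edgeVerts_union D C] at hverts
    rw [ncard_union_eq (Disjoint.mono hSD hNC disjoint_sdiff_right)] at hsparse
    omega

lemma hasFullRank_biUnion_Iio {t : ℕ} {C : Fin t → Set (Sym2 V)}
    (hcirc : ∀ i, IsCircuitEdges G (C i))
    (hmeet : ∀ i : Fin t, 0 < (i : ℕ) → (C i ∩ ⋃ j ∈ Iio i, C j).Nonempty)
    (hnew : ∀ i : Fin t, 0 < (i : ℕ) → (C i \ ⋃ j ∈ Iio i, C j).Nonempty)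
    (hmin : ∀ i : Fin t, 0 < (i : ℕ) → IsMinimalLobe G (⋃ j ∈ Iio i, C j) (C i))
    (i : Fin t) (hi : 0 < (i : ℕ)) : HasFullRank (⋃ j ∈ Iio i, C j) := by
  induction i using WellFoundedLT.induction with
  | _ i ih =>
    set j : Fin t := ⟨i - 1, by omega⟩ with hj
    have hIio : Iio i = insert j (Iio j) := by
      ext k
      simp only [mem_Iio, mem_insert_iff, Fin.lt_def, Fin.ext_iff, hj]
      omega
    rw [hIio, biUnion_insert, union_comm]
    rcases Nat.eq_zero_or_pos (j : ℕ) with hj0 | hj0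
    · have hempty : Iio j = ∅ := by
        ext k
        simp [Fin.lt_def, hj0]
      rw [hempty, biUnion_empty, empty_union]
      exact .of_isCircuitEdges (hcirc j)
    · exact (ih j (by simp only [Fin.lt_def, hj]; omega) hj0).union_of_isMinimalLobe
        (iUnion₂_subset fun k _ => (hcirc k).1) (hcirc j) (hmeet j hj0) (hnew j hj0) (hmin j hj0)

end Ears

section Connectivity

lemma SimpleGraph.exists_separation_of_not_preconnected_induce {G : SimpleGraph V} {Y : Set V}
    (h : ¬ (G.induce Y).Preconnected) :
    ∃ Y₁ Y₂ : Set V, Y₁ ∪ Y₂ = Y ∧ Disjoint Y₁ Y₂ ∧ Y₁.Nonempty ∧ Y₂.Nonempty ∧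
      ∀ u ∈ Y₁, ∀ w ∈ Y₂, ¬ G.Adj u w := by
  simp only [SimpleGraph.Preconnected, not_forall] at h
  obtain ⟨a, b, hab⟩ := h
  set Y₁ : Set V := Subtype.val '' {u | (G.induce Y).Reachable a u}
  refine ⟨Y₁, Y \ Y₁, union_sdiff_cancel (Subtype.coe_image_subset Y _), disjoint_sdiff_right,
    ⟨a, a, .refl a, rfl⟩, ⟨b, b.2, ?_⟩, ?_⟩
  · rintro ⟨u, hu, hub⟩
    exact hab (Subtype.ext hub ▸ hu)
  · rintro _ ⟨u, hu, rfl⟩ w ⟨hw, hwY₁⟩ hadj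
    exact hwY₁ ⟨⟨w, hw⟩, hu.trans (show (G.induce Y).Adj u ⟨w, hw⟩ from hadj).reachable, rfl⟩

variable {G : SimpleGraph V} [Finite V]

lemma IsCircuitEdges.ncard_avoiding_add_two_le {C : Set (Sym2 V)} {Y₁ Y₂ : Set V}
    (hC : IsCircuitEdges G C) (hY₁ : Y₁ ⊆ edgeVerts C) (hY₂ : Y₂ ⊆ edgeVerts C)
    (hne₁ : Y₁.Nonempty) (hne₂ : Y₂.Nonempty)
    (hsep : ∀ e ∈ C, ∀ u ∈ e, u ∈ Y₁ → ∀ w ∈ e, w ∉ Y₂) :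
    {e ∈ C | ∀ v ∈ e, v ∉ Y₂}.ncard + 2 ≤ 2 * (edgeVerts C \ Y₂).ncard := by
  obtain ⟨a, ha⟩ := hne₁
  obtain ⟨ea, hea, hav⟩ := hY₁ ha
  obtain ⟨b, hb⟩ := hne₂
  obtain ⟨eb, heb, hbv⟩ := hY₂ hb
  have hproper : {e ∈ C | ∀ v ∈ e, v ∉ Y₂} ≠ C := fun h =>
    (h.symm ▸ heb : eb ∈ {e ∈ C | ∀ v ∈ e, v ∉ Y₂}).2 b hbv hb
  have hne : {e ∈ C | ∀ v ∈ e, v ∉ Y₂} ≠ ∅ :=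
    nonempty_iff_ne_empty.1 ⟨ea, hea, hsep ea hea a hav ha⟩
  have hverts : edgeVerts {e ∈ C | ∀ v ∈ e, v ∉ Y₂} ⊆ edgeVerts C \ Y₂ :=
    fun v ⟨e, ⟨heC, he⟩, hv⟩ => ⟨⟨e, heC, hv⟩, he v hv⟩
  have := ncard_le_ncard hverts
  have := hC.2.2 _ (sep_subset _ _) hproper hne
  omega

/-- The edges of `C` avoiding `Y₂` and those avoiding `Y₁` are two proper subsets covering `C`. -/
lemma IsCircuitEdges.ncard_add_three_le_of_separated {C F : Set (Sym2 V)} {Y₁ Y₂ : Set V}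
    (hC : IsCircuitEdges G C) (hY₁ : Y₁ ⊆ edgeVerts C) (hY₂ : Y₂ ⊆ edgeVerts C)
    (hne₁ : Y₁.Nonempty) (hne₂ : Y₂.Nonempty) (hdisj : Disjoint Y₁ Y₂)
    (hsep : ∀ e ∈ C, ∀ u ∈ e, u ∈ Y₁ → ∀ w ∈ e, w ∉ Y₂)
    (hF : F ⊆ C) (hFY : ∀ e ∈ F, ∀ v ∈ e, v ∉ Y₁ ∪ Y₂) :
    F.ncard + 3 ≤ 2 * (edgeVerts C \ (Y₁ ∪ Y₂)).ncard := by
  have hA := hC.ncard_avoiding_add_two_le hY₁ hY₂ hne₁ hne₂ hsep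
  have hB := hC.ncard_avoiding_add_two_le hY₂ hY₁ hne₂ hne₁
    fun e he u hu huY w hw hwY => hsep e he w hw hwY u hu huY
  set A := {e ∈ C | ∀ v ∈ e, v ∉ Y₂}
  set B := {e ∈ C | ∀ v ∈ e, v ∉ Y₁}
  have hAB : A ∪ B = C := by
    refine subset_antisymm (union_subset (sep_subset _ _) (sep_subset _ _)) fun e he => ?_
    by_cases h : ∃ u ∈ e, u ∈ Y₁
    · obtain ⟨u, hu, huY⟩ := h
      exact Or.inl ⟨he, hsep e he u hu huY⟩
    · simp only [not_exists, not_and] at h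
      exact Or.inr ⟨he, h⟩
  have hFAB : F ⊆ A ∩ B := fun e he =>
    ⟨⟨hF he, fun v hv h => hFY e he v hv (Or.inr h)⟩,
      ⟨hF he, fun v hv h => hFY e he v hv (Or.inl h)⟩⟩
  have hcover := ncard_union_add_ncard_inter A B
  rw [hAB] at hcover
  have := ncard_le_ncard hFAB
  have := hC.2.1
  have := ncard_sdiff_add_ncard_of_subset hY₁
  have := ncard_sdiff_add_ncard_of_subset hY₂
  have := ncard_sdiff_add_ncard_of_subset (union_subset hY₁ hY₂)
  have := ncard_union_eq hdisj
  omega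

lemma IsCircuitEdges.induce_connected_of_ncard_sdiff_le {C D : Set (Sym2 V)}
    (hC : IsCircuitEdges G C) (hne : (edgeVerts C \ edgeVerts D).Nonempty)
    (hlobe : (C \ D).ncard ≤ 2 * (edgeVerts C \ edgeVerts D).ncard + 1) :
    (G.induce (edgeVerts C \ edgeVerts D)).Connected := by
  set Y := edgeVerts C \ edgeVerts D
  have : Nonempty Y := hne.to_subtype
  refine ⟨?_⟩
  by_contra hpre
  obtain ⟨Y₁, Y₂, hY, hdisj, hne₁, hne₂, hnadj⟩ :=
    SimpleGraph.exists_separation_of_not_preconnected_induce hpre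
  have hYC : Y ⊆ edgeVerts C := sdiff_subset
  have hsep : ∀ e ∈ C, ∀ u ∈ e, u ∈ Y₁ → ∀ w ∈ e, w ∉ Y₂ := by
    intro e he u hu huY w hw hwY
    have hadj := hC.1 he
    rw [(Sym2.mem_and_mem_iff (hdisj.ne_of_mem huY hwY)).1 ⟨hu, hw⟩] at hadj
    exact hnadj u huY w hwY hadj
  have hbound := hC.ncard_add_three_le_of_separated
    ((subset_union_left.trans hY.subset).trans hYC) ((subset_union_right.trans hY.subset).trans hYC)
    hne₁ hne₂ hdisj hsep (F := C ∩ D) inter_subset_left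
    fun e he v hv hvY => (hY.subset hvY).2 ⟨e, he.2, hv⟩
  rw [hY] at hbound
  have := ncard_inter_add_ncard_sdiff_eq_ncard C D
  have := ncard_sdiff_add_ncard_of_subset hYC
  have := hC.2.1
  omega

end Connectivity

end

theorem ear_decomposition_Y_connected_general {V : Type*} [Fintype V]
    (G : SimpleGraph V)
    (t : ℕ) (ht : 2 ≤ t) (C : Fin t → Set (Sym2 V))
    (hcirc : ∀ i : Fin t, IsCircuitEdges G (C i))
    (hE1 : ∀ i : Fin t, 0 < (i : ℕ) → (C i ∩ ⋃ j ∈ Set.Iio i, C j).Nonempty)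
    (hE2 : ∀ i : Fin t, 0 < (i : ℕ) → (C i \ ⋃ j ∈ Set.Iio i, C j).Nonempty)
    (hE3 : ∀ i : Fin t, 0 < (i : ℕ) → ∀ C' : Set (Sym2 V), IsCircuitEdges G C' →
      (C' ∩ ⋃ j ∈ Set.Iio i, C j).Nonempty →
      (C' \ ⋃ j ∈ Set.Iio i, C j).Nonempty →
      ¬ ((C' \ ⋃ j ∈ Set.Iio i, C j) ⊂ (C i \ ⋃ j ∈ Set.Iio i, C j)))
    (last : Fin t) (hlast : (last : ℕ) = t - 1)
    (Y : Set V) (hY : Y = edgeVerts (C last) \ ⋃ j ∈ Set.Iio last, edgeVerts (C j))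
    (hYne : Y.Nonempty) :
    (G.induce Y).Connected := by
  have hlast_pos : 0 < (last : ℕ) := by omega
  rw [← edgeVerts_biUnion] at hY
  subst hY
  have hDr := hasFullRank_biUnion_Iio hcirc hE1 hE2 hE3 last hlast_pos
  exact (hcirc last).induce_connected_of_ncard_sdiff_le hYne
    (hDr.ncard_sdiff_le (Set.iUnion₂_subset fun j _ => (hcirc j).1) (hcirc last) (hE3 last hlast_pos))

/-- Let `G` be `M(2,2)`-connected with an ear decomposition `C 0, …, C (t-1)`
(`t ≥ 2`) of its `(2,2)`-sparsity matroid, `H_i` the subgraph induced by `C i`,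
`Y = V(H_t) \ ⋃_{i<t} V(H_i)` and `X = V(H_t) \ Y`.  If `Y ≠ ∅`, then the
subgraph of `G` induced by `Y` is connected. -/
theorem ear_decomposition_Y_connected {V : Type*} [Fintype V]
    (G : SimpleGraph V) (hM : M22Connected G)
    (t : ℕ) (ht : 2 ≤ t) (C : Fin t → Set (Sym2 V))
    (hcirc : ∀ i : Fin t, IsCircuitEdges G (C i))
    (hE1 : ∀ i : Fin t, 0 < (i : ℕ) → (C i ∩ ⋃ j ∈ Set.Iio i, C j).Nonempty)
    (hE2 : ∀ i : Fin t, 0 < (i : ℕ) → (C i \ ⋃ j ∈ Set.Iio i, C j).Nonempty)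
    (hE3 : ∀ i : Fin t, 0 < (i : ℕ) → ∀ C' : Set (Sym2 V), IsCircuitEdges G C' →
      (C' ∩ ⋃ j ∈ Set.Iio i, C j).Nonempty →
      (C' \ ⋃ j ∈ Set.Iio i, C j).Nonempty →
      ¬ ((C' \ ⋃ j ∈ Set.Iio i, C j) ⊂ (C i \ ⋃ j ∈ Set.Iio i, C j)))
    (hcover : (⋃ i : Fin t, C i) = G.edgeSet)
    (last : Fin t) (hlast : (last : ℕ) = t - 1)
    (Y : Set V) (hY : Y = edgeVerts (C last) \ ⋃ j ∈ Set.Iio last, edgeVerts (C j))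
    (X : Set V) (hX : X = edgeVerts (C last) \ Y)
    (hYne : Y.Nonempty) :
    (G.induce Y).Connected :=
  ear_decomposition_Y_connected_general G t ht C hcirc hE1 hE2 hE3 last hlast Y hY hYne
end
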